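/- For all n ≥ 1, the periodic complexity of the Thue–Morse word satisfies 3n/8 − 1/4 ≤ h_t(n) ≤ 3n/4 + 2. In particular, h_t(n) = Θ(n). -/
import Mathlib


open Finset Filter Asymptotics

/-- `n` is a local period of the infinite word `w` at position `i`:
`n ≥ 1` and either (`n ≤ i` and `w_{i+k} = w_{i-n+k}` for all `k < n`)
or (`n > i` and `w_k = w_{n+k}` for all `k < i`). -/
def IsLocalPeriodAt {α : Type*} (w : ℕ → α) (i n : ℕ) : Prop :=
  1 ≤ n ∧ ((n ≤ i ∧ ∀ k < n, w (i + k) = w (i - n + k)) ∨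
           (i < n ∧ ∀ k < i, w k = w (n + k)))

/-- The periodicity function `p_w(i)`: the least local period of `w` at `i`. -/
noncomputable def perFn {α : Type*} (w : ℕ → α) (i : ℕ) : ℕ :=
  sInf {n | IsLocalPeriodAt w i n}

/-- The summatory function `P_w(n) = ∑_{j<n} p_w(j)`. -/
noncomputable def sumFn {α : Type*} (w : ℕ → α) (n : ℕ) : ℕ :=
  ∑ j ∈ Finset.range n, perFn w j

/-- The periodic complexity `h_w(n) = P_w(n)/n`. -/
noncomputable def perComplexity {α : Type*} (w : ℕ → α) (n : ℕ) : ℝ :=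
  (sumFn w n : ℝ) / n

/-- The Thue–Morse word: `t_i = 0` iff the number of 1's in the binary
representation of `i` is even. -/
def tm (i : ℕ) : ℕ :=
  if Even ((Nat.digits 2 i).count 1) then 0 else 1

lemma tm_le_one (i : ℕ) : tm i ≤ 1 := by unfold tm; split <;> omega

lemma tm_even (j : ℕ) : tm (2 * j) = tm j := by
  rcases Nat.eq_zero_or_pos j with h | h
  · simp [h]
  · unfold tm
    rw [Nat.digits_def' (by norm_num : 1 < 2) (by omega)]
    simp [Nat.mul_div_cancel_left, Nat.mul_mod_right]

lemma tm_odd (j : ℕ) : tm (2 * j + 1) = 1 - tm j := by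
  unfold tm
  rw [Nat.digits_def' (by norm_num : 1 < 2) (by omega)]
  have h1 : (2 * j + 1) % 2 = 1 := by omega
  have h2 : (2 * j + 1) / 2 = j := by omega
  rw [h1, h2]
  simp [List.count_cons, Nat.even_add_one]
  by_cases h : Even ((Nat.digits 2 j).count 1) <;> simp [h]

lemma tm_zero : tm 0 = 0 := by simp [tm]
lemma tm_one : tm 1 = 1 := by
  have := tm_odd 0; rw [tm_zero] at this; simpa using this
lemma tm_two : tm 2 = 1 := by
  have := tm_even 1; rw [tm_one] at this; simpa using this
lemma tm_three : tm 3 = 0 := by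
  have := tm_odd 1; rw [tm_one] at this; simpa using this
lemma tm_four : tm 4 = 1 := by
  have := tm_even 2; rw [tm_two] at this; simpa using this

lemma tm_adj {x : ℕ} (h : tm x = tm (x + 1)) : x % 2 = 1 := by
  rcases Nat.even_or_odd x with ⟨j, hj⟩ | hx
  · exfalso
    have h1 : tm x = tm j := by rw [hj, show j + j = 2 * j by ring, tm_even]
    have h2 : tm (x + 1) = 1 - tm j := by rw [hj, show j + j + 1 = 2 * j + 1 by ring, tm_odd]
    have := tm_le_one j
    omega
  · exact Nat.odd_iff.mp hx

lemma no_odd_center : ∀ n c : ℕ, 1 ≤ n → n ≤ c →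
    (∀ k < n, tm (c + k) = tm (c - n + k)) → ¬ Odd c := by
  intro n
  induction n using Nat.strong_induction_on with
  | _ n ih =>
    intro c hn hnc H hodd
    obtain ⟨j, hj⟩ := hodd
    rcases Nat.even_or_odd n with ⟨m, hm⟩ | hnodd
    · -- n = 2m even
      have hm1 : 1 ≤ m := by omega
      have hjm : m ≤ j := by omega
      have hA : ¬ Odd (j + 1) := by
        apply ih m (by omega) (j + 1) hm1 (by omega)
        intro r hr
        have h := H (2 * r + 1) (by omega)
        rw [show c + (2 * r + 1) = 2 * (j + 1 + r) by omega,
            show c - n + (2 * r + 1) = 2 * (j + 1 - m + r) by omega,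
            tm_even, tm_even] at h
        exact h
      have hB : ¬ Odd j := by
        apply ih m (by omega) j hm1 (by omega)
        intro r hr
        have h := H (2 * r) (by omega)
        rw [show c + 2 * r = 2 * (j + r) + 1 by omega,
            show c - n + 2 * r = 2 * (j - m + r) + 1 by omega,
            tm_odd, tm_odd] at h
        have h1 := tm_le_one (j + r)
        have h2 := tm_le_one (j - m + r)
        omega
      rw [Nat.not_odd_iff_even, Nat.even_iff] at hA hB
      omega
    · -- n odd
      obtain ⟨s, hs⟩ := hnodd
      have hsj : s ≤ j := by omega
      rcases Nat.lt_or_ge s 2 with hs2 | hs2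
      · interval_cases s
        · -- n = 1
          have h := H 0 (by omega)
          rw [show c + 0 = 2 * j + 1 by omega, show c - n + 0 = 2 * j by omega,
              tm_odd, tm_even] at h
          have := tm_le_one j
          omega
        · -- n = 3
          have hj1 : 1 ≤ j := by omega
          have F0 := H 0 (by omega)
          rw [show c + 0 = 2 * j + 1 by omega, show c - n + 0 = 2 * (j - 1) by omega,
              tm_odd, tm_even] at F0
          have F1 := H 1 (by omega)
          rw [show c + 1 = 2 * (j + 1) by omega, show c - n + 1 = 2 * (j - 1) + 1 by omega,
              tm_even, tm_odd] at F1
          have F2 := H 2 (by omega)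
          rw [show c + 2 = 2 * (j + 1) + 1 by omega, show c - n + 2 = 2 * j by omega,
              tm_odd, tm_even] at F2
          have := tm_le_one j
          have := tm_le_one (j - 1)
          have := tm_le_one (j + 1)
          omega
      · -- n = 2s+1, s ≥ 2
        have F1 := H 1 (by omega)
        rw [show c + 1 = 2 * (j + 1) by omega, show c - n + 1 = 2 * (j - s) + 1 by omega,
            tm_even, tm_odd] at F1
        have F2 := H 2 (by omega)
        rw [show c + 2 = 2 * (j + 1) + 1 by omega, show c - n + 2 = 2 * (j - s + 1) by omega,
            tm_odd, tm_even] at F2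
        have F3 := H 3 (by omega)
        rw [show c + 3 = 2 * (j + 2) by omega, show c - n + 3 = 2 * (j - s + 1) + 1 by omega,
            tm_even, tm_odd] at F3
        have F4 := H 4 (by omega)
        rw [show c + 4 = 2 * (j + 2) + 1 by omega, show c - n + 4 = 2 * (j - s + 2) by omega,
            tm_odd, tm_even] at F4
        have e1 : tm (j - s) = tm (j - s + 1) := by
          have := tm_le_one (j + 1); have := tm_le_one (j - s); have := tm_le_one (j - s + 1)
          omega
        have e2 : tm (j - s + 1) = tm (j - s + 2) := by
          have := tm_le_one (j + 2); have := tm_le_one (j - s + 1); have := tm_le_one (j - s + 2)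
          omega
        have o1 := tm_adj e1
        have o2 := tm_adj (show tm (j - s + 1) = tm (j - s + 1 + 1) by
          rw [show j - s + 1 + 1 = j - s + 2 by omega]; exact e2)
        omega

lemma prefix_occ : ∀ n i : ℕ, 1 ≤ n → (∀ k < i, tm k = tm (n + k)) → 3 * i ≤ 2 * n := by
  intro n
  induction n using Nat.strong_induction_on with
  | _ n ih =>
    intro i hn H
    rcases Nat.even_or_odd n with ⟨a, ha⟩ | hodd
    · -- n = 2a
      have ha1 : 1 ≤ a := by omega
      have key : 3 * ((i + 1) / 2) ≤ 2 * a := by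
        apply ih a (by omega) _ ha1
        intro b hb
        have h := H (2 * b) (by omega)
        rw [show n + 2 * b = 2 * (a + b) by omega, tm_even, tm_even] at h
        exact h
      omega
    · -- n odd
      obtain ⟨a, ha⟩ := hodd
      rcases Nat.lt_or_ge i 3 with hi | hi
      · -- i ≤ 2
        rcases Nat.lt_or_ge n 3 with hn3 | hn3
        · -- n = 1
          have hn1 : n = 1 := by omega
          rcases Nat.eq_zero_or_pos i with h0 | h0
          · omega
          · have h := H 0 h0
            rw [tm_zero, show n + 0 = 1 by omega, tm_one] at h
            omega
        · omega
      · -- i ≥ 3: contradiction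
        exfalso
        have F0 := H 0 (by omega)
        rw [tm_zero, show n + 0 = 2 * a + 1 by omega, tm_odd] at F0
        have F1 := H 1 (by omega)
        rw [tm_one, show n + 1 = 2 * (a + 1) by omega, tm_even] at F1
        have F2 := H 2 (by omega)
        rw [tm_two, show n + 2 = 2 * (a + 1) + 1 by omega, tm_odd] at F2
        have := tm_le_one a
        have := tm_le_one (a + 1)
        omega

lemma tm_three_pow (m : ℕ) : ∀ k < 2 ^ (m + 1), tm (3 * 2 ^ m + k) = tm k := by
  induction m with
  | zero =>
    intro k hk
    interval_cases k
    · rw [show 3 * 2 ^ 0 + 0 = 3 by norm_num, tm_three, tm_zero]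
    · rw [show 3 * 2 ^ 0 + 1 = 4 by norm_num, tm_four, tm_one]
  | succ m ih =>
    intro k hk
    rcases Nat.even_or_odd k with ⟨b, hb⟩ | ⟨b, hb⟩
    · have hb2 : b < 2 ^ (m + 1) := by omega
      rw [show 3 * 2 ^ (m + 1) + k = 2 * (3 * 2 ^ m + b) by subst hb; ring_nf,
          tm_even, ih b hb2, show k = 2 * b by omega, tm_even]
    · have hb2 : b < 2 ^ (m + 1) := by
        have : k < 2 ^ (m + 2) := hk
        omega
      rw [show 3 * 2 ^ (m + 1) + k = 2 * (3 * 2 ^ m + b) + 1 by subst hb; ring_nf,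
          tm_odd, ih b hb2, show k = 2 * b + 1 by omega, tm_odd]

lemma isLocalPeriodAt_three (i : ℕ) (h : 1 ≤ i) :
    IsLocalPeriodAt tm i (3 * 2 ^ Nat.log 2 i) := by
  have h1 : i < 2 ^ (Nat.log 2 i + 1) := Nat.lt_pow_succ_log_self (by norm_num) i
  have h2 : 2 ^ (Nat.log 2 i + 1) = 2 * 2 ^ Nat.log 2 i := by ring
  have h3 : 0 < 3 * 2 ^ Nat.log 2 i := by positivity
  refine ⟨by omega, Or.inr ⟨by omega, fun k hk => ?_⟩⟩
  exact (tm_three_pow (Nat.log 2 i) k (by omega)).symm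

lemma perFn_mem (i : ℕ) : IsLocalPeriodAt tm i (perFn tm i) := by
  have hne : {n | IsLocalPeriodAt tm i n}.Nonempty := by
    rcases Nat.eq_zero_or_pos i with h | h
    · exact ⟨1, le_refl 1, Or.inr ⟨by omega, fun k hk => absurd hk (by omega)⟩⟩
    · exact ⟨_, isLocalPeriodAt_three i h⟩
  exact Nat.sInf_mem hne

lemma one_le_perFn (i : ℕ) : 1 ≤ perFn tm i := (perFn_mem i).1

lemma perFn_le {i n : ℕ} (h : IsLocalPeriodAt tm i n) : perFn tm i ≤ n := Nat.sInf_le h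

lemma perFn_zero : perFn tm 0 = 1 := by
  have h1 := one_le_perFn 0
  have h2 : perFn tm 0 ≤ 1 :=
    perFn_le ⟨le_refl 1, Or.inr ⟨by omega, fun k hk => absurd hk (by omega)⟩⟩
  omega

lemma perFn_le_three (i : ℕ) (h : 1 ≤ i) : perFn tm i ≤ 3 * i := by
  have h1 := perFn_le (isLocalPeriodAt_three i h)
  have h2 : 2 ^ Nat.log 2 i ≤ i := Nat.pow_log_le_self 2 (by omega)
  omega

lemma perFn_even_le (l : ℕ) : perFn tm (2 * (l + 1)) ≤ 2 := by
  have hl := tm_le_one l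
  have hl1 := tm_le_one (l + 1)
  by_cases h : tm (l + 1) = tm l
  · -- period 2
    apply perFn_le
    refine ⟨by omega, Or.inl ⟨by omega, fun k hk => ?_⟩⟩
    interval_cases k
    · rw [show 2 * (l + 1) + 0 = 2 * (l + 1) by omega,
          show 2 * (l + 1) - 2 + 0 = 2 * l by omega, tm_even, tm_even, h]
    · rw [show 2 * (l + 1) + 1 = 2 * (l + 1) + 1 by omega,
          show 2 * (l + 1) - 2 + 1 = 2 * l + 1 by omega, tm_odd, tm_odd, h]
  · -- period 1
    have h1 : perFn tm (2 * (l + 1)) ≤ 1 := by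
      apply perFn_le
      refine ⟨by omega, Or.inl ⟨by omega, fun k hk => ?_⟩⟩
      interval_cases k
      rw [show 2 * (l + 1) + 0 = 2 * (l + 1) by omega,
          show 2 * (l + 1) - 1 + 0 = 2 * l + 1 by omega, tm_even, tm_odd]
      omega
    omega

lemma perFn_odd_ge (i : ℕ) (h : Odd i) : 3 * i ≤ 2 * perFn tm i := by
  obtain ⟨h1, hor⟩ := perFn_mem i
  rcases hor with ⟨hle, hsq⟩ | ⟨hlt, hpre⟩
  · exact absurd h (no_odd_center _ i h1 hle hsq)
  · exact prefix_occ _ i h1 hpre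

lemma perFn_even_le' (i : ℕ) (h : Even i) : perFn tm i ≤ 2 := by
  obtain ⟨l, hl⟩ := h
  rcases Nat.eq_zero_or_pos l with h0 | h0
  · simp [hl, h0, perFn_zero]
  · have := perFn_even_le (l - 1)
    rw [show 2 * (l - 1 + 1) = i by omega] at this
    exact this

lemma sumFn_succ (n : ℕ) : sumFn tm (n + 1) = sumFn tm n + perFn tm n := by
  simp [sumFn, Finset.sum_range_succ]

lemma sum_bounds (n : ℕ) :
    3 * n ^ 2 ≤ 8 * sumFn tm n + 2 * n ∧ 4 * sumFn tm n ≤ 3 * n ^ 2 + 8 * n := by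
  induction n using Nat.twoStepInduction with
  | zero => simp [sumFn]
  | one =>
    have h1 : sumFn tm 1 = 1 := by simp [sumFn, perFn_zero]
    rw [h1]; norm_num
  | more n ih _ =>
    obtain ⟨ihl, ihu⟩ := ih
    have e : sumFn tm (n + 2) = sumFn tm n + perFn tm n + perFn tm (n + 1) := by
      rw [sumFn_succ, sumFn_succ]
    rcases Nat.even_or_odd n with he | ho
    · -- n even, n+1 odd
      have b1 : 3 * (n + 1) ≤ 2 * perFn tm (n + 1) := perFn_odd_ge (n + 1) (Even.add_one he)
      have b2 : 1 ≤ perFn tm n := one_le_perFn n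
      have b3 : perFn tm n ≤ 2 := perFn_even_le' n he
      have b4 : perFn tm (n + 1) ≤ 3 * (n + 1) := perFn_le_three (n + 1) (by omega)
      constructor <;> nlinarith [e]
    · -- n odd, n+1 even
      have b1 : 3 * n ≤ 2 * perFn tm n := perFn_odd_ge n ho
      have b2 : 1 ≤ perFn tm (n + 1) := one_le_perFn (n + 1)
      have b3 : perFn tm (n + 1) ≤ 2 := perFn_even_le' (n + 1) (Odd.add_one ho)
      have b4 : perFn tm n ≤ 3 * n := perFn_le_three n (by rcases ho with ⟨a,ha⟩; omega)
      constructor <;> nlinarith [e]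


theorem tm_perComplexity_bounds :
    (∀ n : ℕ, 1 ≤ n →
      3 * (n : ℝ) / 8 - 1 / 4 ≤ perComplexity tm n ∧
        perComplexity tm n ≤ 3 * (n : ℝ) / 4 + 2) ∧
      (fun n : ℕ => perComplexity tm n) =Θ[atTop] (fun n : ℕ => (n : ℝ)) := by
  have main : ∀ n : ℕ, 1 ≤ n →
      3 * (n : ℝ) / 8 - 1 / 4 ≤ perComplexity tm n ∧
        perComplexity tm n ≤ 3 * (n : ℝ) / 4 + 2 := by
    intro n hn
    have hnR : (0 : ℝ) < n := by exact_mod_cast hn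
    obtain ⟨hl, hu⟩ := sum_bounds n
    have hlR : 3 * (n : ℝ) ^ 2 ≤ 8 * (sumFn tm n : ℝ) + 2 * n := by exact_mod_cast hl
    have huR : 4 * (sumFn tm n : ℝ) ≤ 3 * (n : ℝ) ^ 2 + 8 * n := by exact_mod_cast hu
    constructor
    · rw [perComplexity, le_div_iff₀ hnR]
      nlinarith
    · rw [perComplexity, div_le_iff₀ hnR]
      nlinarith
  refine ⟨main, ?_, ?_⟩
  · -- perComplexity =O n
    rw [isBigO_iff]
    refine ⟨11 / 4, eventually_atTop.mpr ⟨1, fun n hn => ?_⟩⟩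
    obtain ⟨h1, h2⟩ := main n hn
    have hnR : (1 : ℝ) ≤ n := by exact_mod_cast hn
    have hpos : 0 ≤ perComplexity tm n := by nlinarith
    rw [Real.norm_eq_abs, Real.norm_eq_abs, abs_of_nonneg hpos,
        abs_of_nonneg (by linarith : (0:ℝ) ≤ (n:ℝ))]
    nlinarith
  · -- n =O perComplexity
    rw [isBigO_iff]
    refine ⟨4, eventually_atTop.mpr ⟨2, fun n hn => ?_⟩⟩
    obtain ⟨h1, h2⟩ := main n (by omega)
    have hnR : (2 : ℝ) ≤ n := by exact_mod_cast hn
    have hpos : 0 ≤ perComplexity tm n := by nlinarith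
    rw [Real.norm_eq_abs, Real.norm_eq_abs, abs_of_nonneg hpos,
        abs_of_nonneg (by linarith : (0:ℝ) ≤ (n:ℝ))]
    nlinarith
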